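/- arXiv:2101.09119 — 2 statements merged into one kernel-verified Lean document; each statement's English description precedes it below -/
import Mathlib

section
/- Let N be a normal subgroup of a group G, let w = y_1⋯y_n be a non-trivial reduced word with y_j = x_{i_j}^{ε_j}, ε_j ∈ {±1}, and consider tuples ḡ = (g_1,…,g_k) ∈ G^k and b̄ = (b_1,…,b_k) ∈ N^k. Then w(b̄ḡ) = a_1^{ε_1} a_2^{ε_2} ⋯ a_n^{ε_n} · w(ḡ), where a_j = (b_{i_j})^{w̃_j(ḡ)} for all j; in particular w(b̄ḡ) ∈ N·w(ḡ). -/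
/-! Words in free groups -/

/-- Evaluation of a word `w ∈ F_k` at a `k`-tuple of elements of `G`. -/
def wordEval {G : Type*} [Group G] {k : ℕ} (w : FreeGroup (Fin k)) (g : Fin k → G) : G :=
  FreeGroup.lift g w

/-- The length of (the reduced form of) a word in a free group. -/
def wordLength {k : ℕ} (w : FreeGroup (Fin k)) : ℕ :=
  (FreeGroup.toWord w).length

/-- `partialEval w g i` is the evaluation at `g` of the partial subword `w_i`
consisting of the first `i` letters of the reduced word `w`. -/
def partialEval {G : Type*} [Group G] {k : ℕ} (w : FreeGroup (Fin k)) (g : Fin k → G)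
    (i : ℕ) : G :=
  ((((FreeGroup.toWord w).take i).map fun y => if y.2 then g y.1 else (g y.1)⁻¹)).prod

/-! Nonsolvable length -/

/-- A group is (isomorphic to) a direct product of non-abelian simple groups. -/
def IsNonabelianSemisimple (Q : Type*) [Group Q] : Prop :=
  ∃ (ι : Type) (S : ι → Subgroup Q),
    Finite ι ∧ (∀ i, IsSimpleGroup (S i)) ∧ (∀ i, ¬ IsSolvable (S i)) ∧
      Nonempty (Q ≃* ((i : ι) → (S i)))

/-- The factor `K/H` of a normal series is solvable; equivalently some term of the
derived series of `K` is contained in `H`. -/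
def SolvableFactor {G : Type*} [Group G] (H K : Subgroup G) : Prop :=
  ∃ d : ℕ, (derivedSeries (↥K) d).map K.subtype ≤ H

/-- The factor `K/H` of a normal series is a direct product of non-abelian
simple groups. -/
def SemisimpleFactor {G : Type*} [Group G] (H K : Subgroup G) : Prop :=
  ∃ hn : (H.subgroupOf K).Normal,
    letI := hn
    IsNonabelianSemisimple (↥K ⧸ H.subgroupOf K)

/-- `G` has a normal series, each of whose factors is either solvable or a direct
product of non-abelian simple groups, with exactly `n` factors of the latter
(nonsolvable) kind. -/
def HasNSSeriesOfLength (G : Type*) [Group G] (n : ℕ) : Prop :=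
  ∃ (m : ℕ) (N : Fin (m + 1) → Subgroup G) (ns : Finset (Fin m)),
    N 0 = ⊥ ∧ N (Fin.last m) = ⊤ ∧ Monotone N ∧ (∀ i, (N i).Normal) ∧
    (∀ i : Fin m, i ∉ ns → SolvableFactor (N i.castSucc) (N i.succ)) ∧
    (∀ i : Fin m, i ∈ ns → SemisimpleFactor (N i.castSucc) (N i.succ)) ∧
    ns.card = n

/-- The nonsolvable length `λ(G)` of a group `G`: the minimal number of nonsolvable
factors in a normal series of `G` each of whose factors is either solvable or a
direct product of non-abelian simple groups. -/
noncomputable def nonsolvableLength (G : Type*) [Group G] : ℕ :=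
  sInf {n | HasNSSeriesOfLength G n}

/-- `ν(G)`: the length of a shortest non-trivial (reduced) law of `G`. -/
noncomputable def shortestLaw (G : Type*) [Group G] : ℕ :=
  sInf {n | ∃ (k : ℕ) (w : FreeGroup (Fin k)), w ≠ 1 ∧ wordLength w = n ∧
    ∀ g : Fin k → G, wordEval w g = 1}

/-! Let `p_j` and `q_j` be the values at `ḡ` and at `b̄ḡ` of the prefix of length `j` of `w`, and
`y_j` its `j`-th letter. Then `q_{j+1} p_{j+1}⁻¹ = (q_j p_j⁻¹) ⋅ p_j (y_j(b̄ḡ) y_j(ḡ)⁻¹) p_j⁻¹`, so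
`w(b̄ḡ) w(ḡ)⁻¹` telescopes into a product of these conjugates; each is `b_{i_j}^{p_j⁻¹}` for a
positive letter and `(b_{i_j}^{p_{j+1}⁻¹})⁻¹` for a negative one. The membership in `N ⋅ w(ḡ)`
is the fact that `w(b̄ḡ)` and `w(ḡ)` agree in `G ⧸ N`. -/

namespace List

variable {α G : Type*} [Group G]

theorem prod_ofFn_conj {n : ℕ} (c : G) (h : Fin n → G) :
    (ofFn fun i => c * h i * c⁻¹).prod = c * (ofFn h).prod * c⁻¹ := by
  simpa [map_ofFn, Function.comp_def] using (map_list_prod (MulAut.conj c) (ofFn h)).symm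

theorem prod_map_eq_prod_ofFn_conj_mul (f f' : α → G) :
    ∀ L : List α, (L.map f).prod =
      (ofFn fun j : Fin L.length =>
        ((L.take j).map f').prod * (f (L.get j) * (f' (L.get j))⁻¹) *
          ((L.take j).map f').prod⁻¹).prod * (L.map f').prod
  | [] => by simp
  | x :: L => by
    simp only [length_cons, ofFn_succ, get_cons_zero, get_cons_succ', Fin.val_zero, Fin.val_succ,
      take_zero, take_succ_cons, map_nil, map_cons, prod_nil, prod_cons]
    have conj_mul (c p d : G) : c * p * d * (c * p)⁻¹ = c * (p * d * p⁻¹) * c⁻¹ := by group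
    simp only [conj_mul, prod_ofFn_conj, prod_map_eq_prod_ofFn_conj_mul f f' L]
    group

end List

section Words

variable {G : Type*} [Group G]

def letterEval {α : Type*} (h : α → G) (y : α × Bool) : G :=
  if y.2 then h y.1 else (h y.1)⁻¹

theorem conj_letterEval_mul_mul_inv {α : Type*} (b g : α → G) (y : α × Bool) (t : G) :
    t * (letterEval (fun i => b i * g i) y * (letterEval g y)⁻¹) * t⁻¹ =
      if y.2 then t * b y.1 * t⁻¹
      else (t * letterEval g y * b y.1 * (t * letterEval g y)⁻¹)⁻¹ := by
  rcases y with ⟨i, _ | _⟩ <;> simp only [letterEval, Bool.false_eq_true, ↓reduceIte] <;> group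

variable {k : ℕ}

theorem wordEval_eq_prod_map_letterEval (w : FreeGroup (Fin k)) (h : Fin k → G) :
    wordEval w h = ((FreeGroup.toWord w).map (letterEval h)).prod := by
  conv_lhs => rw [wordEval, ← FreeGroup.mk_toWord (x := w), FreeGroup.lift_mk]
  simp only [Bool.cond_eq_ite]
  rfl

theorem partialEval_eq_prod_take (w : FreeGroup (Fin k)) (g : Fin k → G) (j : ℕ) :
    partialEval w g j = (((FreeGroup.toWord w).take j).map (letterEval g)).prod :=
  rfl

theorem partialEval_succ (w : FreeGroup (Fin k)) (g : Fin k → G)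
    (j : Fin (FreeGroup.toWord w).length) :
    partialEval w g (j + 1) = partialEval w g j * letterEval g ((FreeGroup.toWord w).get j) := by
  rw [partialEval_eq_prod_take, partialEval_eq_prod_take, List.map_take, List.map_take,
    List.prod_take_succ _ _ (by simp)]
  simp

theorem wordEval_mul_mul_inv_mem {N : Subgroup G} (hN : N.Normal) (w : FreeGroup (Fin k))
    (g b : Fin k → G) (hb : ∀ i, b i ∈ N) :
    wordEval w (fun i => b i * g i) * (wordEval w g)⁻¹ ∈ N := by
  have := hN
  have mk_wordEval (h : Fin k → G) :
      ((wordEval w h : G) : G ⧸ N) = wordEval w fun i => (h i : G ⧸ N) :=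
    FreeGroup.lift_unique ((QuotientGroup.mk' N).comp (FreeGroup.lift h)) (by simp)
  rw [← div_eq_mul_inv, ← QuotientGroup.eq_iff_div_mem, mk_wordEval, mk_wordEval]
  congr 1
  funext i
  rw [QuotientGroup.mk_mul, (QuotientGroup.eq_one_iff _).mpr (hb i), one_mul]

end Words

/-- With 0-based positions `j`, the paper's `w̃_j(ḡ)⁻¹` is `partialEval w g j` for a positive
letter and `partialEval w g (j + 1)` for a negative one. -/
theorem wordEval_mul_tuple_eq_general {G : Type*} [Group G] {N : Subgroup G} (hN : N.Normal)
    {k : ℕ} (w : FreeGroup (Fin k))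
    (g b : Fin k → G) (hb : ∀ i, b i ∈ N) :
    wordEval w (fun i => b i * g i) =
      (List.ofFn fun j : Fin (FreeGroup.toWord w).length =>
        (fun y : Fin k × Bool =>
          (fun t : G =>
            if y.2 then t * b y.1 * t⁻¹ else (t * b y.1 * t⁻¹)⁻¹)
          (if y.2 then partialEval w g (j : ℕ) else partialEval w g ((j : ℕ) + 1)))
        ((FreeGroup.toWord w).get j)).prod * wordEval w g ∧
    wordEval w (fun i => b i * g i) * (wordEval w g)⁻¹ ∈ N := by
  refine ⟨?_, wordEval_mul_mul_inv_mem hN w g b hb⟩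
  simp only [wordEval_eq_prod_map_letterEval]
  rw [List.prod_map_eq_prod_ofFn_conj_mul _ (letterEval g)]
  congr 3 with j
  simp only [← partialEval_eq_prod_take, conj_letterEval_mul_mul_inv, ← partialEval_succ]
  split_ifs <;> rfl

/-- Let `N ⊴ G`, let `w = y_1 ⋯ y_n` be a non-trivial reduced word (with `y_j = x_{i_j}^{ε_j}`),
and let `ḡ ∈ G^k`, `b̄ ∈ N^k`.  Then
`w(b̄ḡ) = a_1^{ε_1} ⋯ a_n^{ε_n} ⋅ w(ḡ)` where `a_j = (b_{i_j})^{w̃_j(ḡ)}`, with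
`w̃_j = w_j⁻¹` if `ε_j = -1` and `w̃_j = w_{j-1}⁻¹` if `ε_j = +1`;
in particular `w(b̄ḡ) ∈ N ⋅ w(ḡ)`.
(Here, for a letter `y = (x_i, ε)` at (0-based) position `j` of the reduced word of `w`,
the conjugating element `w̃_j(ḡ)⁻¹` is `w_j(ḡ)` if `ε = +1` and `w_{j+1}(ḡ)` if `ε = -1`,
in 0-based indexing, so that `a_j = w̃_j(ḡ)⁻¹ ⋅ b_{i_j} ⋅ w̃_j(ḡ)`.) -/
theorem wordEval_mul_tuple_eq {G : Type*} [Group G] {N : Subgroup G} (hN : N.Normal)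
    {k : ℕ} (w : FreeGroup (Fin k)) (hw : w ≠ 1)
    (g b : Fin k → G) (hb : ∀ i, b i ∈ N) :
    wordEval w (fun i => b i * g i) =
      (List.ofFn fun j : Fin (FreeGroup.toWord w).length =>
        (fun y : Fin k × Bool =>
          (fun t : G =>
            if y.2 then t * b y.1 * t⁻¹ else (t * b y.1 * t⁻¹)⁻¹)
          (if y.2 then partialEval w g (j : ℕ) else partialEval w g ((j : ℕ) + 1)))
        ((FreeGroup.toWord w).get j)).prod * wordEval w g ∧
    wordEval w (fun i => b i * g i) * (wordEval w g)⁻¹ ∈ N :=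
  wordEval_mul_tuple_eq_general hN w g b hb
end

section
/- Let G ≤ Sym(Ω) be a finite transitive permutation group with a non-trivial normal subgroup M* = ∏_{i=0}^m M_i, where the subgroups M_i are permuted transitively by G under conjugation. Let ω ∈ Ω, and let R be a subgroup of H = N_G(M_0) containing (G_ω ∩ H)·M̂_0, where M̂_0 = ∏_{i≠0} M_i. If W is an irreducible constituent of the induced module Ind_R^H(ℂ) on which M_0 acts non-trivially, then the permutation module ℂΩ has a submodule isomorphic to V = Ind_H^G(W). -/
/-! Let `ℓ := ev₁ ∘ ι`, an `R`-invariant functional on `W`, and send `f ∈ Ind_H^G(W)` to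
`θ f : α ↦ ∑_{g • α = ω} ℓ (f g)`; this is `G`-equivariant. If `θ f = 0`, the function
`u := ℓ ∘ f` on `G` is left `R`-invariant and its sums over the cosets `G_ω y` and `M_0 y`
vanish, the latter because `M_0 ⊴ H` acts non-trivially on the irreducible `W` and so has no
non-zero fixed vectors. Summing the `G_ω`-coset sums over `M̂_0`, an element `g ∈ G_ω ∖ H`
contributes nothing, since `g⁻¹ M_0 g` is a factor `M_k` with `k ≠ 0`, so `g M̂_0 g⁻¹ ⊇ M_0`;
an element `g ∈ G_ω ∩ H ≤ R` contributes `|M̂_0| u(y)`. Hence `u = 0`, and then `f = 0`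
because `ι` is injective. -/

/-! Induced representations (function model).  For a subgroup `H ≤ G` and an
`F`-linear representation `ρ` of `H` on `W`, the induced `F G`-module
`Ind_H^G(W) = W ⊗_{F H} F G` is modelled (for `G` finite) by the space of functions
`f : G → W` with `f (h * g) = ρ h (f g)`, on which `G` acts by `(x • f) g = f (g * x)`. -/

section Induced

variable (F : Type*) [Field F] (G : Type*) [Group G] (H : Subgroup G)
  (W : Type*) [AddCommGroup W] [Module F W] (ρ : Representation F (↥H) W)

def inducedCarrier : Submodule F (G → W) where
  carrier := {f | ∀ (h : ↥H) (g : G), f (↑h * g) = ρ h (f g)}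
  add_mem' := by
    intro f₁ f₂ h1 h2 h g
    simp only [Pi.add_apply, h1 h g, h2 h g, map_add]
  zero_mem' := by
    intro h g
    simp
  smul_mem' := by
    intro c f hf h g
    simp only [Pi.smul_apply, hf h g, map_smul]

def inducedRep : Representation F G ↥(inducedCarrier F G H W ρ) where
  toFun x :=
    { toFun := fun f => ⟨fun g => (f : G → W) (g * x), by
        intro h g
        show (f : G → W) ((↑h * g) * x) = ρ h ((f : G → W) (g * x))
        rw [mul_assoc]
        exact f.2 h (g * x)⟩
      map_add' := fun f₁ f₂ => Subtype.ext (funext fun g => rfl)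
      map_smul' := fun c f => Subtype.ext (funext fun g => rfl) }
  map_one' := by
    apply LinearMap.ext
    intro f
    apply Subtype.ext
    funext g
    simp
  map_mul' := by
    intro x y
    apply LinearMap.ext
    intro f
    apply Subtype.ext
    funext g
    simp [mul_assoc]

/-- The canonical copy `w ↦ w ⊗ 1` of `W` inside the induced module `Ind_H^G(W)`:
the function supported on `H` with value `ρ h w` at `h ∈ H`. -/
noncomputable def inducedUnit (z : W) : ↥(inducedCarrier F G H W ρ) := by
  classical
  exact ⟨fun g => if hg : g ∈ H then ρ ⟨g, hg⟩ z else 0, by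
    intro h g
    dsimp only
    by_cases hg : g ∈ H
    · rw [dif_pos hg, dif_pos (mul_mem h.2 hg)]
      have : (⟨↑h * g, mul_mem h.2 hg⟩ : ↥H) = h * ⟨g, hg⟩ := rfl
      rw [this, map_mul]
      rfl
    · rw [dif_neg hg, dif_neg, map_zero]
      intro hmem
      exact hg (by simpa using mul_mem (inv_mem h.2) hmem)⟩

end Induced

def RepIrreducible {F G W : Type*} [Field F] [Group G] [AddCommGroup W] [Module F W]
    (ρ : Representation F G W) : Prop :=
  (∃ w : W, w ≠ 0) ∧
    ∀ U : Submodule F W, (∀ (g : G), ∀ w ∈ U, ρ g w ∈ U) → U = ⊥ ∨ U = ⊤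

def permRep (F : Type*) [Field F] (G : Type*) [Group G] (Ω : Type*) [MulAction G Ω] :
    Representation F G (Ω → F) where
  toFun x :=
    { toFun := fun f => fun ωx => f (x⁻¹ • ωx)
      map_add' := fun f₁ f₂ => rfl
      map_smul' := fun c f => rfl }
  map_one' := by
    apply LinearMap.ext
    intro f
    funext ωx
    simp
  map_mul' := by
    intro x y
    apply LinearMap.ext
    intro f
    funext ωx
    simp [mul_smul]

theorem RepIrreducible.sum_apply_eq_zero {k H W : Type*} [Field k] [Group H] [AddCommGroup W]
    [Module k W] {ρ : Representation k H W} (hirr : RepIrreducible ρ) (S : Subgroup H)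
    [S.Normal] [Fintype S] (hS : ∃ s ∈ S, ρ s ≠ 1) (w : W) : ∑ s : S, ρ s w = 0 := by
  have hsum : ∑ s : S, ρ s w ∈ Representation.invariants (ρ.comp S.subtype) := fun t => by
    simp only [MonoidHom.coe_comp, Subgroup.coe_subtype, Function.comp_apply, map_sum,
      ← Module.End.mul_apply, ← map_mul]
    exact Fintype.sum_equiv (Equiv.mulLeft t) _ _ fun s => rfl
  rcases hirr.2 _ fun h => ρ.le_comap_invariants S h with hbot | htop
  · simpa [hbot] using hsum
  · obtain ⟨s, hs, hρs⟩ := hS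
    refine absurd (LinearMap.ext fun v => ?_) hρs
    have hv : v ∈ Representation.invariants (ρ.comp S.subtype) := htop ▸ Submodule.mem_top
    exact hv ⟨s, hs⟩

theorem Subgroup.sum_mul_eq_zero_of_le {G k : Type*} [Group G] [Field k] [CharZero k]
    {T S : Subgroup G} [Fintype T] [Fintype S] (hTS : T ≤ S) {u : G → k}
    (hT : ∀ y, ∑ t : T, u (t * y) = 0) (y : G) : ∑ s : S, u (s * y) = 0 := by
  have hshift : ∀ t : T, ∑ s : S, u (t * (s * y)) = ∑ s : S, u (s * y) := fun t =>
    Fintype.sum_equiv (Equiv.mulLeft ⟨t, hTS t.2⟩) _ _ fun s => by simp [mul_assoc]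
  have h : ∑ t : T, ∑ s : S, u (t * (s * y)) = 0 := by
    rw [Finset.sum_comm]
    exact Finset.sum_eq_zero fun s _ => hT (s * y)
  simp only [hshift, Finset.sum_const, Finset.card_univ, smul_eq_zero] at h
  exact h.resolve_left Fintype.card_ne_zero

theorem Subgroup.sum_mul_mul_eq_sum_map_conj {G k : Type*} [Group G] [AddCommMonoid k]
    (L : Subgroup G) (g : G) [Fintype L] [Fintype (L.map (MulAut.conj g).toMonoidHom)]
    (u : G → k) (y : G) :
    ∑ l : L, u (g * (l * y)) = ∑ s : L.map (MulAut.conj g).toMonoidHom, u (s * (g * y)) := by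
  refine Fintype.sum_equiv (κ := L.map (MulAut.conj g).toMonoidHom)
    (MulEquiv.subgroupMap (MulAut.conj g) L).toEquiv _ _ fun l => ?_
  show u (g * (l * y)) = u (g * l * g⁻¹ * (g * y))
  simp only [mul_assoc, inv_mul_cancel_left]

theorem le_map_conj_iSup_of_notMem_normalizer {G ι : Type*} [Group G] (M : ι → Subgroup G)
    (i : ι) (hperm : ∀ (g : G) (j : ι), ∃ k, (M j).map (MulAut.conj g).toMonoidHom = M k)
    {g : G} (hg : g ∉ Subgroup.normalizer (M i : Set G)) :
    M i ≤ (⨆ j ∈ ({i}ᶜ : Set ι), M j).map (MulAut.conj g).toMonoidHom := by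
  obtain ⟨k, hk⟩ := hperm g⁻¹ i
  have hki : k ≠ i := by
    rintro rfl
    exact hg (inv_mem_iff.mp (Subgroup.mem_normalizer_iff_map_conj_eq.mpr hk))
  intro x hx
  have hconj : MulAut.conj g⁻¹ x ∈ M k := hk ▸ Subgroup.mem_map_of_mem _ hx
  exact ⟨_, le_iSup₂ (f := fun j (_ : j ∈ ({i}ᶜ : Set ι)) => M j) k hki hconj,
    by simp [mul_assoc]⟩

theorem eq_zero_of_coset_sums_eq_zero {G k : Type*} [Group G] [Field k] [CharZero k]
    {K N L R : Subgroup G} [Fintype K] [Fintype N] [Fintype L]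
    (hR : (K ⊓ Subgroup.normalizer (N : Set G)) ⊔ L ≤ R)
    (hconj : ∀ g ∉ Subgroup.normalizer (N : Set G), N ≤ L.map (MulAut.conj g).toMonoidHom)
    {u : G → k} (hu : ∀ r ∈ R, ∀ y, u (r * y) = u y)
    (hN : ∀ y, ∑ n : N, u (n * y) = 0) (hK : ∀ y, ∑ x : K, u (x * y) = 0) : u = 0 := by
  classical
  funext y
  have hLsum : ∀ x : K, ∑ l : L, u (x * (l * y)) =
      if (x : G) ∈ Subgroup.normalizer (N : Set G) then Fintype.card L • u y else 0 := by
    intro x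
    split_ifs with hx
    · have hxR : (x : G) ∈ R := hR (le_sup_left (a := K ⊓ _) ⟨x.2, hx⟩)
      have hlR : ∀ l : L, (l : G) ∈ R := fun l => hR (le_sup_right (b := L) l.2)
      simp [hu _ hxR, hu _ (hlR _)]
    · let _ : Fintype (L.map (MulAut.conj (x : G)).toMonoidHom) :=
        Fintype.ofEquiv L (MulEquiv.subgroupMap (MulAut.conj (x : G)) L).toEquiv
      rw [L.sum_mul_mul_eq_sum_map_conj]
      exact Subgroup.sum_mul_eq_zero_of_le (hconj _ hx) hN _
  have htotal : ∑ x : K, ∑ l : L, u (x * (l * y)) = 0 := by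
    rw [Finset.sum_comm]
    exact Finset.sum_eq_zero fun l _ => hK (l * y)
  simp only [hLsum, Finset.sum_ite, Finset.sum_const_zero, add_zero, Finset.sum_const,
    smul_smul, smul_eq_zero] at htotal
  refine htotal.resolve_left (Nat.mul_ne_zero (Finset.card_ne_zero_of_mem (a := 1) ?_)
    Fintype.card_ne_zero)
  simp

section FrobeniusFunctional

variable {F G : Type*} [Field F] [Group G] {H : Subgroup G} {W : Type*} [AddCommGroup W]
  [Module F W] {ρ : Representation F H W}

def inducedEval (g : G) : inducedCarrier F G H W ρ →ₗ[F] W :=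
  LinearMap.proj g ∘ₗ (inducedCarrier F G H W ρ).subtype

variable {σ : Representation F G W}
  {ι : W →ₗ[F] inducedCarrier F G H F (Representation.trivial F (G := H) (V := F))}

theorem inducedEval_one_apply_of_isIntertwining
    (hι : ∀ (g : G) (w : W), ι (σ g w) =
      inducedRep F G H F (Representation.trivial F (G := H) (V := F)) g (ι w))
    (g : G) (w : W) : inducedEval 1 (ι (σ g w)) = (ι w : G → F) g := by
  rw [hι]
  exact congrArg (ι w : G → F) (one_mul g)

theorem inducedEval_one_apply_of_mem
    (hι : ∀ (g : G) (w : W), ι (σ g w) =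
      inducedRep F G H F (Representation.trivial F (G := H) (V := F)) g (ι w))
    (h : H) (w : W) : inducedEval 1 (ι (σ h w)) = inducedEval 1 (ι w) := by
  rw [inducedEval_one_apply_of_isIntertwining hι]
  simpa [inducedEval] using (ι w).2 h 1

theorem inducedCarrier_eq_zero_of_forall_apply_eq_zero {ℓ : W →ₗ[F] F}
    (hℓ : ∀ w, (∀ h : H, ℓ (ρ h w) = 0) → w = 0) {f : inducedCarrier F G H W ρ}
    (hf : ∀ y, ℓ ((f : G → W) y) = 0) : f = 0 :=
  Subtype.ext <| funext fun x => hℓ _ fun h => f.2 h x ▸ hf (h * x)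

end FrobeniusFunctional

section InducedToPerm

variable {F G : Type*} [Field F] [Group G] [Fintype G] {H : Subgroup G} {W : Type*}
  [AddCommGroup W] [Module F W] {ρ : Representation F H W} {Ω : Type*} [MulAction G Ω]
  [DecidableEq Ω]

def inducedToPerm (ω : Ω) (ℓ : W →ₗ[F] F) : inducedCarrier F G H W ρ →ₗ[F] (Ω → F) where
  toFun f α := ∑ g ∈ Finset.univ.filter (fun g : G => g • α = ω), ℓ ((f : G → W) g)
  map_add' f₁ f₂ := funext fun α => by simp [Finset.sum_add_distrib]
  map_smul' c f := funext fun α => by simp [Finset.mul_sum]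

theorem inducedToPerm_inducedRep (ω : Ω) (ℓ : W →ₗ[F] F) (x : G)
    (f : inducedCarrier F G H W ρ) :
    inducedToPerm ω ℓ (inducedRep F G H W ρ x f) = permRep F G Ω x (inducedToPerm ω ℓ f) := by
  funext α
  refine Finset.sum_equiv (Equiv.mulRight x) (fun g => ?_) fun g _ => rfl
  simp [mul_smul]

theorem inducedToPerm_apply_inv_smul (ω : Ω) (ℓ : W →ₗ[F] F) (f : inducedCarrier F G H W ρ)
    [Fintype (MulAction.stabilizer G ω)] (y : G) :
    inducedToPerm ω ℓ f (y⁻¹ • ω) =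
      ∑ k : MulAction.stabilizer G ω, ℓ ((f : G → W) (k * y)) := by
  symm
  refine Finset.sum_bij' (fun k _ => k * y) (fun g hg => ⟨g * y⁻¹, ?_⟩) (fun k _ => ?_)
    (fun g _ => Finset.mem_univ _) (fun k _ => by simp) (fun g _ => by simp) fun k _ => rfl
  · simpa [mul_smul] using hg
  · simpa [mul_smul] using MulAction.mem_stabilizer_iff.mp k.2

end InducedToPerm

theorem perm_module_contains_induced_general {G : Type*} [Group G] [Finite G]
    {Ω : Type*} [MulAction G Ω]
    {m : ℕ} (M : Fin (m + 1) → Subgroup G)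
    -- … whose factors are permuted transitively by `G` under conjugation
    (hperm : ∀ (g : G) (i : Fin (m + 1)), ∃ j, (M i).map (MulAut.conj g).toMonoidHom = M j)
    (ω : Ω)
    -- `R` is a subgroup of `H = N_G(M_0)` containing `(G_ω ∩ H) ⬝ M̂_0`
    (R : Subgroup G) (hRH : R ≤ (Subgroup.normalizer (M 0 : Set G)))
    (hRcont : (MulAction.stabilizer G ω ⊓ (Subgroup.normalizer (M 0 : Set G))) ⊔
      (⨆ j ∈ ({0}ᶜ : Set (Fin (m + 1))), M j) ≤ R)
    -- `W` is an irreducible constituent of `Ind_R^H(ℂ)` …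
    {W : Type*} [AddCommGroup W] [Module ℂ W]
    (ρ : Representation ℂ ↥(Subgroup.normalizer (M 0 : Set G)) W) (hirr : RepIrreducible ρ)
    (ι : W →ₗ[ℂ] ↥(inducedCarrier ℂ ↥(Subgroup.normalizer (M 0 : Set G)) (R.subgroupOf (Subgroup.normalizer (M 0 : Set G))) ℂ
      (Representation.trivial ℂ (G := ↥(R.subgroupOf (Subgroup.normalizer (M 0 : Set G)))) (V := ℂ))))
    (hι : Function.Injective ι)
    (hιequiv : ∀ (h : ↥(Subgroup.normalizer (M 0 : Set G))) (v : W),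
      ι (ρ h v) = inducedRep ℂ ↥(Subgroup.normalizer (M 0 : Set G)) (R.subgroupOf (Subgroup.normalizer (M 0 : Set G))) ℂ
        (Representation.trivial ℂ (G := ↥(R.subgroupOf (Subgroup.normalizer (M 0 : Set G)))) (V := ℂ)) h (ι v))
    -- … on which `M_0` acts non-trivially
    (hM0 : ∃ x : ↥(Subgroup.normalizer (M 0 : Set G)), (x : G) ∈ M 0 ∧ ρ x ≠ 1) :
    ∃ θ : ↥(inducedCarrier ℂ G (Subgroup.normalizer (M 0 : Set G)) W ρ) →ₗ[ℂ] (Ω → ℂ),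
      Function.Injective θ ∧
      ∀ (x : G) (v : ↥(inducedCarrier ℂ G (Subgroup.normalizer (M 0 : Set G)) W ρ)),
        θ (inducedRep ℂ G (Subgroup.normalizer (M 0 : Set G)) W ρ x v) = permRep ℂ G Ω x (θ v) := by
  classical
  have := Fintype.ofFinite G
  let ℓ : W →ₗ[ℂ] ℂ := inducedEval 1 ∘ₗ ι
  have hℓ : ∀ h w, ℓ (ρ h w) = (ι w : _ → ℂ) h := inducedEval_one_apply_of_isIntertwining hιequiv
  have hsep : ∀ w, (∀ h, ℓ (ρ h w) = 0) → w = 0 := fun w hw =>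
    hι <| (map_zero ι).symm ▸ Subtype.ext (funext fun h => (hℓ h w).symm.trans (hw h))
  have hM0sum : ∀ w, ∑ s : M 0, ρ ⟨s, Subgroup.le_normalizer s.2⟩ w = 0 := fun w => by
    rw [← hirr.sum_apply_eq_zero ((M 0).subgroupOf _) hM0 w]
    exact Fintype.sum_equiv (Subgroup.subgroupOfEquivOfLe Subgroup.le_normalizer).toEquiv.symm
      _ _ fun s => rfl
  refine ⟨inducedToPerm ω ℓ, ?_, inducedToPerm_inducedRep ω ℓ⟩
  rw [← LinearMap.ker_eq_bot, LinearMap.ker_eq_bot']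
  intro f hf
  refine inducedCarrier_eq_zero_of_forall_apply_eq_zero hsep (congrFun
    (eq_zero_of_coset_sums_eq_zero (u := fun y => ℓ ((f : G → W) y)) hRcont
      (fun g hg => le_map_conj_iSup_of_notMem_normalizer M 0 hperm hg) ?_ ?_ ?_))
  · intro r hr y
    exact (congrArg ℓ (f.2 ⟨r, hRH hr⟩ y)).trans
      (inducedEval_one_apply_of_mem hιequiv ⟨⟨r, hRH hr⟩, hr⟩ _)
  · intro y
    rw [← map_zero ℓ, ← hM0sum ((f : G → W) y), map_sum]
    exact Finset.sum_congr rfl fun s _ => congrArg ℓ (f.2 ⟨s, Subgroup.le_normalizer s.2⟩ y)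
  · intro y
    rw [← inducedToPerm_apply_inv_smul, hf]
    rfl

/-- Let `G ≤ Sym(Ω)` be a finite transitive permutation group with a non-trivial normal
subgroup `M* = ∏_{i=0}^m M_i`, the `M_i` being permuted transitively by `G` under
conjugation.  Let `ω ∈ Ω` and let `R` be a subgroup of `H = N_G(M_0)` containing
`(G_ω ∩ H)·M̂_0`, where `M̂_0 = ∏_{i ≠ 0} M_i`.  If `W` is an irreducible constituent of
`Ind_R^H(ℂ)` on which `M_0` acts non-trivially, then the permutation module `ℂΩ` has a
submodule isomorphic to `V = Ind_H^G(W)`; equivalently, there is an injective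
`G`-equivariant linear map `V → ℂΩ`. -/
theorem perm_module_contains_induced {G : Type*} [Group G] [Finite G]
    {Ω : Type*} [Finite Ω] [MulAction G Ω] [FaithfulSMul G Ω]
    [MulAction.IsPretransitive G Ω]
    {m : ℕ} (M : Fin (m + 1) → Subgroup G)
    -- the `M i` form an internal direct product …
    (hcomm : ∀ i j, i ≠ j → ∀ x ∈ M i, ∀ y ∈ M j, Commute x y)
    (hindep : ∀ i, M i ⊓ (⨆ j ∈ ({i}ᶜ : Set (Fin (m + 1))), M j) = ⊥)
    -- … which is a non-trivial normal subgroup of `G` …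
    (hnormal : (⨆ i, M i).Normal) (hne : (⨆ i, M i) ≠ ⊥)
    -- … whose factors are permuted transitively by `G` under conjugation
    (hperm : ∀ (g : G) (i : Fin (m + 1)), ∃ j, (M i).map (MulAut.conj g).toMonoidHom = M j)
    (htrans : ∀ i j, ∃ g : G, (M i).map (MulAut.conj g).toMonoidHom = M j)
    (ω : Ω)
    -- `R` is a subgroup of `H = N_G(M_0)` containing `(G_ω ∩ H) ⬝ M̂_0`
    (R : Subgroup G) (hRH : R ≤ (Subgroup.normalizer (M 0 : Set G)))
    (hRcont : (MulAction.stabilizer G ω ⊓ (Subgroup.normalizer (M 0 : Set G))) ⊔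
      (⨆ j ∈ ({0}ᶜ : Set (Fin (m + 1))), M j) ≤ R)
    -- `W` is an irreducible constituent of `Ind_R^H(ℂ)` …
    {W : Type*} [AddCommGroup W] [Module ℂ W]
    (ρ : Representation ℂ ↥(Subgroup.normalizer (M 0 : Set G)) W) (hirr : RepIrreducible ρ)
    (ι : W →ₗ[ℂ] ↥(inducedCarrier ℂ ↥(Subgroup.normalizer (M 0 : Set G)) (R.subgroupOf (Subgroup.normalizer (M 0 : Set G))) ℂ
      (Representation.trivial ℂ (G := ↥(R.subgroupOf (Subgroup.normalizer (M 0 : Set G)))) (V := ℂ))))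
    (hι : Function.Injective ι)
    (hιequiv : ∀ (h : ↥(Subgroup.normalizer (M 0 : Set G))) (v : W),
      ι (ρ h v) = inducedRep ℂ ↥(Subgroup.normalizer (M 0 : Set G)) (R.subgroupOf (Subgroup.normalizer (M 0 : Set G))) ℂ
        (Representation.trivial ℂ (G := ↥(R.subgroupOf (Subgroup.normalizer (M 0 : Set G)))) (V := ℂ)) h (ι v))
    -- … on which `M_0` acts non-trivially
    (hM0 : ∃ x : ↥(Subgroup.normalizer (M 0 : Set G)), (x : G) ∈ M 0 ∧ ρ x ≠ 1) :
    ∃ θ : ↥(inducedCarrier ℂ G (Subgroup.normalizer (M 0 : Set G)) W ρ) →ₗ[ℂ] (Ω → ℂ),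
      Function.Injective θ ∧
      ∀ (x : G) (v : ↥(inducedCarrier ℂ G (Subgroup.normalizer (M 0 : Set G)) W ρ)),
        θ (inducedRep ℂ G (Subgroup.normalizer (M 0 : Set G)) W ρ x v) = permRep ℂ G Ω x (θ v) :=
  perm_module_contains_induced_general M hperm ω R hRH hRcont ρ hirr ι hι hιequiv hM0
end
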